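/- Let μ > 0 and λ be real constants with λ + 2μ > 0 (so that λ + 3μ > 0), and set c := (λ+μ)/(λ+3μ). Let U ⊆ ℝ² be open and let v : U → ℝ² be smooth with 𝓛₀v := μΔv + (λ+μ)∇(div v) = 0 on U. Define w : R(U) → ℝ² by w(x) := 𝒟₀v(Rx), where R(x₁,x₂) := (−x₁,x₂) and 𝒟₀v(x) := −v(x) + c x₁² (−Δv₁(x), Δv₂(x)) − 2c x₁ (∂₂v₂(x), ∂₂v₁(x)). Then 𝓛₀w = 0 on R(U). -/

import Mathlib

noncomputable section

open Real

/-- The Euclidean plane. -/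
abbrev E2 : Type := EuclideanSpace ℝ (Fin 2)

/-- Partial derivative `∂ᵢf` (with `i = 0` corresponding to `∂₁`). -/
noncomputable def pd (i : Fin 2) (f : E2 → ℝ) (x : E2) : ℝ :=
  fderiv ℝ f x (EuclideanSpace.single i 1)

/-- Laplacian of a scalar function. -/
noncomputable def lap (f : E2 → ℝ) (x : E2) : ℝ :=
  pd 0 (pd 0 f) x + pd 1 (pd 1 f) x

/-- Divergence `div u = ∂₁u₁ + ∂₂u₂`. -/
noncomputable def divg (u : E2 → Fin 2 → ℝ) (x : E2) : ℝ :=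
  pd 0 (fun y => u y 0) x + pd 1 (fun y => u y 1) x

/-- The Lamé operator `𝓛₀u = μΔu + (λ+μ)∇(div u)`, `i`-th component. -/
noncomputable def lame (μ lam : ℝ) (u : E2 → Fin 2 → ℝ) (x : E2) (i : Fin 2) : ℝ :=
  μ * lap (fun y => u y i) x + (lam + μ) * pd i (divg u) x

namespace LameHelper


theorem pd_congr {f g : E2 → ℝ} {x : E2} (h : f =ᶠ[nhds x] g) (i : Fin 2) :
    pd i f x = pd i g x := by unfold pd; rw [h.fderiv_eq]

theorem pd_congr_on {U : Set E2} (hU : IsOpen U) {f g : E2 → ℝ}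
    (h : ∀ z ∈ U, f z = g z) {x : E2} (hx : x ∈ U) (i : Fin 2) :
    pd i f x = pd i g x :=
  pd_congr (Filter.eventuallyEq_iff_exists_mem.2 ⟨U, hU.mem_nhds hx, h⟩) i

theorem pd_zero (i : Fin 2) (x : E2) : pd i (fun _ => (0:ℝ)) x = 0 := by
  unfold pd; rw [fderiv_fun_const]; simp

theorem pd_neg {f : E2 → ℝ} (i : Fin 2) (x : E2) :
    pd i (fun z => -(f z)) x = -(pd i f x) := by
  unfold pd; rw [fderiv_fun_neg]; simp

theorem pd_add {f g : E2 → ℝ} {x : E2} (hf : DifferentiableAt ℝ f x)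
    (hg : DifferentiableAt ℝ g x) (i : Fin 2) :
    pd i (fun z => f z + g z) x = pd i f x + pd i g x := by
  unfold pd; rw [fderiv_fun_add hf hg]; simp

theorem pd_const_mul {f : E2 → ℝ} {x : E2} (hf : DifferentiableAt ℝ f x) (a : ℝ) (i : Fin 2) :
    pd i (fun z => a * f z) x = a * pd i f x := by
  unfold pd; rw [fderiv_const_mul hf]; simp

theorem pd_mul {f g : E2 → ℝ} {x : E2} (hf : DifferentiableAt ℝ f x)
    (hg : DifferentiableAt ℝ g x) (i : Fin 2) :
    pd i (fun z => f z * g z) x = f x * pd i g x + g x * pd i f x := by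
  unfold pd; rw [fderiv_fun_mul hf hg]; simp

theorem coord_eq (j : Fin 2) : (fun z : E2 => z j) = ⇑(EuclideanSpace.proj (𝕜 := ℝ) (ι := Fin 2) j) := rfl

theorem diff_coord (j : Fin 2) (x : E2) : DifferentiableAt ℝ (fun z : E2 => z j) x := by
  rw [coord_eq]; exact (EuclideanSpace.proj (𝕜 := ℝ) (ι := Fin 2) j).differentiableAt

theorem pd_coord (i j : Fin 2) (x : E2) :
    pd i (fun z : E2 => z j) x = if i = j then 1 else 0 := by
  unfold pd
  rw [coord_eq, ContinuousLinearMap.fderiv]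
  show (EuclideanSpace.single i (1:ℝ)) j = _
  rw [EuclideanSpace.single_apply]
  by_cases h : i = j <;> simp [h, eq_comm]

theorem smooth_pd {U : Set E2} (hU : IsOpen U) {f : E2 → ℝ}
    (hf : ContDiffOn ℝ ((⊤:ℕ∞) : WithTop ℕ∞) f U) (i : Fin 2) :
    ContDiffOn ℝ ((⊤:ℕ∞) : WithTop ℕ∞) (pd i f) U := by
  have h1 : ContDiffOn ℝ ((⊤:ℕ∞) : WithTop ℕ∞) (fderiv ℝ f) U :=
    hf.fderiv_of_isOpen hU (by simp)
  exact (ContinuousLinearMap.apply ℝ ℝ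
    (EuclideanSpace.single i (1:ℝ))).contDiff.comp_contDiffOn h1

theorem diff_of_smooth {F : Type*} [NormedAddCommGroup F] [NormedSpace ℝ F]
    {U : Set E2} (hU : IsOpen U) {f : E2 → F}
    (hf : ContDiffOn ℝ ((⊤:ℕ∞) : WithTop ℕ∞) f U) {z : E2} (hz : z ∈ U) :
    DifferentiableAt ℝ f z :=
  ((hf.differentiableOn (by simp)).differentiableAt (hU.mem_nhds hz))

theorem pd_comm {U : Set E2} (hU : IsOpen U) {f : E2 → ℝ}
    (hf : ContDiffOn ℝ ((⊤:ℕ∞) : WithTop ℕ∞) f U) {y : E2} (hy : y ∈ U) (i j : Fin 2) :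
    pd i (pd j f) y = pd j (pd i f) y := by
  have hct : ContDiffAt ℝ 2 f y :=
    ((hf y hy).contDiffAt (hU.mem_nhds hy)).of_le (by norm_cast)
  have hsym := hct.isSymmSndFDerivAt (by simp)
  have hdf : DifferentiableAt ℝ (fderiv ℝ f) y :=
    diff_of_smooth hU (hf.fderiv_of_isOpen hU (by simp)) hy
  have key : ∀ a b : Fin 2, pd a (pd b f) y =
      fderiv ℝ (fderiv ℝ f) y (EuclideanSpace.single a 1) (EuclideanSpace.single b 1) := by
    intro a b
    have : pd b f = fun z => (fderiv ℝ f z) (EuclideanSpace.single b (1:ℝ)) := rfl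
    rw [show pd a (pd b f) y = fderiv ℝ (fun z => (fderiv ℝ f z)
        (EuclideanSpace.single b (1:ℝ))) y (EuclideanSpace.single a 1) from rfl]
    rw [fderiv_clm_apply hdf (differentiableAt_const _)]
    simp
  rw [key i j, key j i, hsym]

def RL : E2 →L[ℝ] E2 :=
  ContinuousLinearMap.id ℝ E2 -
    (EuclideanSpace.proj (𝕜 := ℝ) (ι := Fin 2) 0).smulRight (EuclideanSpace.single 0 (2:ℝ))

theorem RL_apply (z : E2) (j : Fin 2) :
    RL z j = z j - z 0 * (EuclideanSpace.single (0:Fin 2) (2:ℝ)) j := by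
  simp [RL, ContinuousLinearMap.sub_apply, ContinuousLinearMap.smulRight_apply]

theorem RL_apply0 (z : E2) : RL z 0 = -(z 0) := by
  rw [RL_apply, EuclideanSpace.single_apply]; simp; ring

theorem RL_apply1 (z : E2) : RL z 1 = z 1 := by
  rw [RL_apply, EuclideanSpace.single_apply]; simp

theorem E2_ext {a b : E2} (h0 : a 0 = b 0) (h1 : a 1 = b 1) : a = b :=
  PiLp.ext fun (j : Fin 2) => by fin_cases j
                                 · exact h0
                                 · exact h1

theorem R_eq_RL {R : E2 → E2} (hR : ∀ x : E2, R x 0 = -(x 0) ∧ R x 1 = x 1) :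
    R = ⇑RL := by
  funext z
  apply E2_ext
  · rw [RL_apply0]; exact (hR z).1
  · rw [RL_apply1]; exact (hR z).2

theorem RL_invol (z : E2) : RL (RL z) = z := by
  apply E2_ext
  · rw [RL_apply0, RL_apply0]; ring
  · rw [RL_apply1, RL_apply1]

theorem RL_single0 : RL (EuclideanSpace.single 0 (1:ℝ)) = -(EuclideanSpace.single (0:Fin 2) (1:ℝ)) := by
  apply E2_ext
  · rw [RL_apply0]; simp [EuclideanSpace.single_apply]
  · rw [RL_apply1]; simp [EuclideanSpace.single_apply]

theorem RL_single1 : RL (EuclideanSpace.single 1 (1:ℝ)) = EuclideanSpace.single (1:Fin 2) (1:ℝ) := by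
  apply E2_ext
  · rw [RL_apply0]; simp [EuclideanSpace.single_apply]
  · rw [RL_apply1]

theorem pd_comp0 {F f : E2 → ℝ} {x : E2} (hfF : ∀ z, F z = f (RL z))
    (hf : DifferentiableAt ℝ f (RL x)) : pd 0 F x = -(pd 0 f (RL x)) := by
  have hFe : F = f ∘ ⇑RL := funext fun z => hfF z
  unfold pd
  rw [hFe, fderiv_comp x hf RL.differentiableAt, ContinuousLinearMap.fderiv,
    ContinuousLinearMap.comp_apply, RL_single0, map_neg]

theorem pd_comp1 {F f : E2 → ℝ} {x : E2} (hfF : ∀ z, F z = f (RL z))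
    (hf : DifferentiableAt ℝ f (RL x)) : pd 1 F x = pd 1 f (RL x) := by
  have hFe : F = f ∘ ⇑RL := funext fun z => hfF z
  unfold pd
  rw [hFe, fderiv_comp x hf RL.differentiableAt, ContinuousLinearMap.fderiv,
    ContinuousLinearMap.comp_apply, RL_single1]

theorem pd_coord00 (x : E2) : pd 0 (fun z : E2 => z 0) x = 1 := by
  rw [pd_coord]; simp

theorem pd_coord10 (x : E2) : pd 1 (fun z : E2 => z 0) x = 0 := by
  rw [pd_coord]; simp

theorem smooth_coord0 {U : Set E2} :
    ContDiffOn ℝ ((⊤:ℕ∞) : WithTop ℕ∞) (fun z : E2 => z 0) U := by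
  rw [coord_eq]; exact (EuclideanSpace.proj (𝕜 := ℝ) (ι := Fin 2) 0).contDiff.contDiffOn

theorem smooth_shape {U : Set E2}
    {F1 F2 G1 G2 G3 H1 H2 : E2 → ℝ}
    (hF1 : ContDiffOn ℝ ((⊤:ℕ∞) : WithTop ℕ∞) F1 U)
    (hF2 : ContDiffOn ℝ ((⊤:ℕ∞) : WithTop ℕ∞) F2 U)
    (hG1 : ContDiffOn ℝ ((⊤:ℕ∞) : WithTop ℕ∞) G1 U)
    (hG2 : ContDiffOn ℝ ((⊤:ℕ∞) : WithTop ℕ∞) G2 U)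
    (hG3 : ContDiffOn ℝ ((⊤:ℕ∞) : WithTop ℕ∞) G3 U)
    (hH1 : ContDiffOn ℝ ((⊤:ℕ∞) : WithTop ℕ∞) H1 U)
    (hH2 : ContDiffOn ℝ ((⊤:ℕ∞) : WithTop ℕ∞) H2 U)
    (a1 a2 b1 b2 b3 c1 c2 : ℝ) :
    ContDiffOn ℝ ((⊤:ℕ∞) : WithTop ℕ∞) (fun z : E2 =>
      a1 * F1 z + a2 * F2 z + z 0 * (b1 * G1 z + b2 * G2 z + b3 * G3 z)
        + z 0 * (z 0 * (c1 * H1 z + c2 * H2 z))) U := by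
  exact ((((contDiffOn_const.mul hF1).add (contDiffOn_const.mul hF2)).add
    (smooth_coord0.mul (((contDiffOn_const.mul hG1).add (contDiffOn_const.mul hG2)).add
      (contDiffOn_const.mul hG3)))).add
    (smooth_coord0.mul (smooth_coord0.mul
      ((contDiffOn_const.mul hH1).add (contDiffOn_const.mul hH2)))))

theorem pd_shape {F1 F2 G1 G2 G3 H1 H2 : E2 → ℝ} {y : E2}
    (dF1 : DifferentiableAt ℝ F1 y) (dF2 : DifferentiableAt ℝ F2 y)
    (dG1 : DifferentiableAt ℝ G1 y) (dG2 : DifferentiableAt ℝ G2 y)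
    (dG3 : DifferentiableAt ℝ G3 y)
    (dH1 : DifferentiableAt ℝ H1 y) (dH2 : DifferentiableAt ℝ H2 y)
    (a1 a2 b1 b2 b3 c1 c2 : ℝ) (i : Fin 2) :
    pd i (fun z : E2 =>
      a1 * F1 z + a2 * F2 z + z 0 * (b1 * G1 z + b2 * G2 z + b3 * G3 z)
        + z 0 * (z 0 * (c1 * H1 z + c2 * H2 z))) y
    = a1 * pd i F1 y + a2 * pd i F2 y
      + ((b1 * G1 y + b2 * G2 y + b3 * G3 y) * pd i (fun z : E2 => z 0) y
          + y 0 * (b1 * pd i G1 y + b2 * pd i G2 y + b3 * pd i G3 y))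
      + ((y 0 * (c1 * H1 y + c2 * H2 y)) * pd i (fun z : E2 => z 0) y
          + y 0 * ((c1 * H1 y + c2 * H2 y) * pd i (fun z : E2 => z 0) y
              + y 0 * (c1 * pd i H1 y + c2 * pd i H2 y))) := by
  have dx0 : DifferentiableAt ℝ (fun z : E2 => z 0) y := diff_coord 0 y
  have dGs : DifferentiableAt ℝ (fun z => b1 * G1 z + b2 * G2 z + b3 * G3 z) y :=
    ((dG1.const_mul b1).add (dG2.const_mul b2)).add (dG3.const_mul b3)
  have dHs : DifferentiableAt ℝ (fun z => c1 * H1 z + c2 * H2 z) y :=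
    (dH1.const_mul c1).add (dH2.const_mul c2)
  have dF12 : DifferentiableAt ℝ (fun z => a1 * F1 z + a2 * F2 z) y :=
    (dF1.const_mul a1).add (dF2.const_mul a2)
  have dT3 : DifferentiableAt ℝ (fun z : E2 => z 0 * (b1 * G1 z + b2 * G2 z + b3 * G3 z)) y :=
    dx0.mul dGs
  have dxH : DifferentiableAt ℝ (fun z : E2 => z 0 * (c1 * H1 z + c2 * H2 z)) y :=
    dx0.mul dHs
  have dT4 : DifferentiableAt ℝ (fun z : E2 => z 0 * (z 0 * (c1 * H1 z + c2 * H2 z))) y :=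
    dx0.mul dxH
  rw [pd_add (dF12.fun_add dT3) dT4, pd_add dF12 dT3,
    pd_add (dF1.const_mul a1) (dF2.const_mul a2),
    pd_const_mul dF1, pd_const_mul dF2,
    pd_mul dx0 dGs, pd_mul dx0 dxH, pd_mul dx0 dHs,
    pd_add ((dG1.const_mul b1).fun_add (dG2.const_mul b2)) (dG3.const_mul b3),
    pd_add (dG1.const_mul b1) (dG2.const_mul b2),
    pd_const_mul dG1, pd_const_mul dG2, pd_const_mul dG3,
    pd_add (dH1.const_mul c1) (dH2.const_mul c2),
    pd_const_mul dH1, pd_const_mul dH2]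
  ring

theorem pd_lin4 {P Q Rr S : E2 → ℝ} {y : E2}
    (dP : DifferentiableAt ℝ P y) (dQ : DifferentiableAt ℝ Q y)
    (dR : DifferentiableAt ℝ Rr y) (dS : DifferentiableAt ℝ S y)
    (aa bb : ℝ) (i : Fin 2) :
    pd i (fun w => aa * (P w + Q w) + bb * (Rr w + S w)) y
      = aa * (pd i P y + pd i Q y) + bb * (pd i Rr y + pd i S y) := by
  rw [pd_add ((dP.fun_add dQ).const_mul aa) ((dR.fun_add dS).const_mul bb),
    pd_const_mul (dP.fun_add dQ), pd_const_mul (dR.fun_add dS), pd_add dP dQ, pd_add dR dS]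

theorem pdsw1 {U : Set E2} (hU : IsOpen U) {f : E2 → ℝ}
    (hf : ContDiffOn ℝ ((⊤:ℕ∞) : WithTop ℕ∞) f U) :
    ∀ z ∈ U, pd 1 (pd 0 f) z = pd 0 (pd 1 f) z :=
  fun _ hz => pd_comm hU hf hz 1 0

theorem pdsw2 {U : Set E2} (hU : IsOpen U) {f : E2 → ℝ}
    (hf : ContDiffOn ℝ ((⊤:ℕ∞) : WithTop ℕ∞) f U) :
    ∀ z ∈ U, pd 1 (pd 0 (pd 0 f)) z = pd 0 (pd 0 (pd 1 f)) z := by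
  intro z hz
  rw [pd_comm hU (smooth_pd hU hf 0) hz 1 0]
  exact pd_congr_on hU (pdsw1 hU hf) hz 0

theorem pdsw3 {U : Set E2} (hU : IsOpen U) {f : E2 → ℝ}
    (hf : ContDiffOn ℝ ((⊤:ℕ∞) : WithTop ℕ∞) f U) :
    ∀ z ∈ U, pd 1 (pd 0 (pd 0 (pd 0 f))) z = pd 0 (pd 0 (pd 0 (pd 1 f))) z := by
  intro z hz
  rw [pd_comm hU (smooth_pd hU (smooth_pd hU hf 0) 0) hz 1 0]
  exact pd_congr_on hU (pdsw2 hU hf) hz 0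

end LameHelper

/-- If `v` is a smooth solution of the Lamé equation `𝓛₀v = 0` on an open set `U ⊆ ℝ²`,
then `w(x) := 𝒟₀v(Rx)`, with
`𝒟₀v(x) = −v(x) + c x₁² (−Δv₁(x), Δv₂(x)) − 2c x₁ (∂₂v₂(x), ∂₂v₁(x))` and
`c = (λ+μ)/(λ+3μ)`, satisfies `𝓛₀w = 0` on `R(U)`. -/
theorem reflected_field_solves_lame
    (μ lam c : ℝ) (hμ : 0 < μ) (hlam : 0 < lam + 2 * μ)
    (hc : c = (lam + μ) / (lam + 3 * μ))
    (R : E2 → E2) (hR : ∀ x : E2, R x 0 = -(x 0) ∧ R x 1 = x 1)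
    (U : Set E2) (hU : IsOpen U)
    (v : E2 → Fin 2 → ℝ) (hv : ContDiffOn ℝ (⊤ : ℕ∞) v U)
    (hlame : ∀ x ∈ U, ∀ i : Fin 2, lame μ lam v x i = 0)
    (D0v : E2 → Fin 2 → ℝ)
    (hD0v0 : ∀ x : E2,
      D0v x 0 = -(v x 0) + c * (x 0) ^ 2 * (-lap (fun y => v y 0) x)
        - 2 * c * x 0 * pd 1 (fun y => v y 1) x)
    (hD0v1 : ∀ x : E2,
      D0v x 1 = -(v x 1) + c * (x 0) ^ 2 * lap (fun y => v y 1) x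
        - 2 * c * x 0 * pd 1 (fun y => v y 0) x)
    (w : E2 → Fin 2 → ℝ) (hw : ∀ x : E2, w x = D0v (R x)) :
    ∀ x ∈ R '' U, ∀ i : Fin 2, lame μ lam w x i = 0 := by
  intro x hx i
  have h30 : (0:ℝ) < lam + 3 * μ := by linarith
  have h3 : lam + 3 * μ ≠ 0 := ne_of_gt h30
  have hcc : c * (lam + 3 * μ) = lam + μ := by rw [hc, div_mul_cancel₀ _ h3]
  have hRfun : R = ⇑LameHelper.RL := LameHelper.R_eq_RL hR
  obtain ⟨y, hyU, hxy⟩ := hx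
  have hyx : LameHelper.RL x = y := by rw [← hxy, hRfun]; exact LameHelper.RL_invol y
  have hyU' : LameHelper.RL x ∈ U := by rw [hyx]; exact hyU
  simp only [lap] at hD0v0 hD0v1
  have SA_0_0 : ContDiffOn ℝ ((⊤:ℕ∞) : WithTop ℕ∞) (fun t => v t 0) U :=
    (ContinuousLinearMap.proj (R := ℝ) (φ := fun _ : Fin 2 => ℝ) 0).contDiff.comp_contDiffOn (hv.of_le (by simp))
  have SB_0_0 : ContDiffOn ℝ ((⊤:ℕ∞) : WithTop ℕ∞) (fun t => v t 1) U :=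
    (ContinuousLinearMap.proj (R := ℝ) (φ := fun _ : Fin 2 => ℝ) 1).contDiff.comp_contDiffOn (hv.of_le (by simp))
  have SA_0_1 : ContDiffOn ℝ ((⊤:ℕ∞) : WithTop ℕ∞) (pd 1 ((fun t => v t 0))) U := LameHelper.smooth_pd hU SA_0_0 1
  have SA_1_0 : ContDiffOn ℝ ((⊤:ℕ∞) : WithTop ℕ∞) (pd 0 ((fun t => v t 0))) U := LameHelper.smooth_pd hU SA_0_0 0
  have SA_0_2 : ContDiffOn ℝ ((⊤:ℕ∞) : WithTop ℕ∞) (pd 1 (pd 1 ((fun t => v t 0)))) U := LameHelper.smooth_pd hU SA_0_1 1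
  have SA_1_1 : ContDiffOn ℝ ((⊤:ℕ∞) : WithTop ℕ∞) (pd 0 (pd 1 ((fun t => v t 0)))) U := LameHelper.smooth_pd hU SA_0_1 0
  have SA_2_0 : ContDiffOn ℝ ((⊤:ℕ∞) : WithTop ℕ∞) (pd 0 (pd 0 ((fun t => v t 0)))) U := LameHelper.smooth_pd hU SA_1_0 0
  have SA_0_3 : ContDiffOn ℝ ((⊤:ℕ∞) : WithTop ℕ∞) (pd 1 (pd 1 (pd 1 ((fun t => v t 0))))) U := LameHelper.smooth_pd hU SA_0_2 1
  have SA_1_2 : ContDiffOn ℝ ((⊤:ℕ∞) : WithTop ℕ∞) (pd 0 (pd 1 (pd 1 ((fun t => v t 0))))) U := LameHelper.smooth_pd hU SA_0_2 0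
  have SA_2_1 : ContDiffOn ℝ ((⊤:ℕ∞) : WithTop ℕ∞) (pd 0 (pd 0 (pd 1 ((fun t => v t 0))))) U := LameHelper.smooth_pd hU SA_1_1 0
  have SA_3_0 : ContDiffOn ℝ ((⊤:ℕ∞) : WithTop ℕ∞) (pd 0 (pd 0 (pd 0 ((fun t => v t 0))))) U := LameHelper.smooth_pd hU SA_2_0 0
  have SB_0_1 : ContDiffOn ℝ ((⊤:ℕ∞) : WithTop ℕ∞) (pd 1 ((fun t => v t 1))) U := LameHelper.smooth_pd hU SB_0_0 1
  have SB_1_0 : ContDiffOn ℝ ((⊤:ℕ∞) : WithTop ℕ∞) (pd 0 ((fun t => v t 1))) U := LameHelper.smooth_pd hU SB_0_0 0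
  have SB_0_2 : ContDiffOn ℝ ((⊤:ℕ∞) : WithTop ℕ∞) (pd 1 (pd 1 ((fun t => v t 1)))) U := LameHelper.smooth_pd hU SB_0_1 1
  have SB_1_1 : ContDiffOn ℝ ((⊤:ℕ∞) : WithTop ℕ∞) (pd 0 (pd 1 ((fun t => v t 1)))) U := LameHelper.smooth_pd hU SB_0_1 0
  have SB_2_0 : ContDiffOn ℝ ((⊤:ℕ∞) : WithTop ℕ∞) (pd 0 (pd 0 ((fun t => v t 1)))) U := LameHelper.smooth_pd hU SB_1_0 0
  have SB_0_3 : ContDiffOn ℝ ((⊤:ℕ∞) : WithTop ℕ∞) (pd 1 (pd 1 (pd 1 ((fun t => v t 1))))) U := LameHelper.smooth_pd hU SB_0_2 1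
  have SB_1_2 : ContDiffOn ℝ ((⊤:ℕ∞) : WithTop ℕ∞) (pd 0 (pd 1 (pd 1 ((fun t => v t 1))))) U := LameHelper.smooth_pd hU SB_0_2 0
  have SB_2_1 : ContDiffOn ℝ ((⊤:ℕ∞) : WithTop ℕ∞) (pd 0 (pd 0 (pd 1 ((fun t => v t 1))))) U := LameHelper.smooth_pd hU SB_1_1 0
  have SB_3_0 : ContDiffOn ℝ ((⊤:ℕ∞) : WithTop ℕ∞) (pd 0 (pd 0 (pd 0 ((fun t => v t 1))))) U := LameHelper.smooth_pd hU SB_2_0 0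
  have dA_0_0 : ∀ z ∈ U, DifferentiableAt ℝ ((fun t => v t 0)) z := fun z hz => LameHelper.diff_of_smooth hU SA_0_0 hz
  have dB_0_0 : ∀ z ∈ U, DifferentiableAt ℝ ((fun t => v t 1)) z := fun z hz => LameHelper.diff_of_smooth hU SB_0_0 hz
  have dA_0_1 : ∀ z ∈ U, DifferentiableAt ℝ (pd 1 ((fun t => v t 0))) z := fun z hz => LameHelper.diff_of_smooth hU SA_0_1 hz
  have dA_1_0 : ∀ z ∈ U, DifferentiableAt ℝ (pd 0 ((fun t => v t 0))) z := fun z hz => LameHelper.diff_of_smooth hU SA_1_0 hz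
  have dA_0_2 : ∀ z ∈ U, DifferentiableAt ℝ (pd 1 (pd 1 ((fun t => v t 0)))) z := fun z hz => LameHelper.diff_of_smooth hU SA_0_2 hz
  have dA_1_1 : ∀ z ∈ U, DifferentiableAt ℝ (pd 0 (pd 1 ((fun t => v t 0)))) z := fun z hz => LameHelper.diff_of_smooth hU SA_1_1 hz
  have dA_2_0 : ∀ z ∈ U, DifferentiableAt ℝ (pd 0 (pd 0 ((fun t => v t 0)))) z := fun z hz => LameHelper.diff_of_smooth hU SA_2_0 hz
  have dA_0_3 : ∀ z ∈ U, DifferentiableAt ℝ (pd 1 (pd 1 (pd 1 ((fun t => v t 0))))) z := fun z hz => LameHelper.diff_of_smooth hU SA_0_3 hz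
  have dA_1_2 : ∀ z ∈ U, DifferentiableAt ℝ (pd 0 (pd 1 (pd 1 ((fun t => v t 0))))) z := fun z hz => LameHelper.diff_of_smooth hU SA_1_2 hz
  have dA_2_1 : ∀ z ∈ U, DifferentiableAt ℝ (pd 0 (pd 0 (pd 1 ((fun t => v t 0))))) z := fun z hz => LameHelper.diff_of_smooth hU SA_2_1 hz
  have dA_3_0 : ∀ z ∈ U, DifferentiableAt ℝ (pd 0 (pd 0 (pd 0 ((fun t => v t 0))))) z := fun z hz => LameHelper.diff_of_smooth hU SA_3_0 hz
  have dB_0_1 : ∀ z ∈ U, DifferentiableAt ℝ (pd 1 ((fun t => v t 1))) z := fun z hz => LameHelper.diff_of_smooth hU SB_0_1 hz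
  have dB_1_0 : ∀ z ∈ U, DifferentiableAt ℝ (pd 0 ((fun t => v t 1))) z := fun z hz => LameHelper.diff_of_smooth hU SB_1_0 hz
  have dB_0_2 : ∀ z ∈ U, DifferentiableAt ℝ (pd 1 (pd 1 ((fun t => v t 1)))) z := fun z hz => LameHelper.diff_of_smooth hU SB_0_2 hz
  have dB_1_1 : ∀ z ∈ U, DifferentiableAt ℝ (pd 0 (pd 1 ((fun t => v t 1)))) z := fun z hz => LameHelper.diff_of_smooth hU SB_1_1 hz
  have dB_2_0 : ∀ z ∈ U, DifferentiableAt ℝ (pd 0 (pd 0 ((fun t => v t 1)))) z := fun z hz => LameHelper.diff_of_smooth hU SB_2_0 hz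
  have dB_0_3 : ∀ z ∈ U, DifferentiableAt ℝ (pd 1 (pd 1 (pd 1 ((fun t => v t 1))))) z := fun z hz => LameHelper.diff_of_smooth hU SB_0_3 hz
  have dB_1_2 : ∀ z ∈ U, DifferentiableAt ℝ (pd 0 (pd 1 (pd 1 ((fun t => v t 1))))) z := fun z hz => LameHelper.diff_of_smooth hU SB_1_2 hz
  have dB_2_1 : ∀ z ∈ U, DifferentiableAt ℝ (pd 0 (pd 0 (pd 1 ((fun t => v t 1))))) z := fun z hz => LameHelper.diff_of_smooth hU SB_2_1 hz
  have dB_3_0 : ∀ z ∈ U, DifferentiableAt ℝ (pd 0 (pd 0 (pd 0 ((fun t => v t 1))))) z := fun z hz => LameHelper.diff_of_smooth hU SB_3_0 hz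
  have hg0 : (fun s => D0v s 0) = (fun z => ((-1 : ℝ)) * v z 0 + (0 : ℝ) * v z 0 + z 0 * (((-2 : ℝ) * c) * pd 1 ((fun t => v t 1)) z + (0 : ℝ) * v z 0 + (0 : ℝ) * v z 0) + z 0 * (z 0 * (((-1 : ℝ) * c) * pd 0 (pd 0 ((fun t => v t 0))) z + ((-1 : ℝ) * c) * pd 1 (pd 1 ((fun t => v t 0))) z))) := by
    funext z; rw [hD0v0 z]; ring
  have hg1 : (fun s => D0v s 1) = (fun z => ((-1 : ℝ)) * v z 1 + (0 : ℝ) * v z 1 + z 0 * (((-2 : ℝ) * c) * pd 1 ((fun t => v t 0)) z + (0 : ℝ) * v z 1 + (0 : ℝ) * v z 1) + z 0 * (z 0 * (((1 : ℝ) * c) * pd 0 (pd 0 ((fun t => v t 1))) z + ((1 : ℝ) * c) * pd 1 (pd 1 ((fun t => v t 1))) z))) := by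
    funext z; rw [hD0v1 z]; ring
  have hsg0 : ContDiffOn ℝ ((⊤:ℕ∞) : WithTop ℕ∞) (fun s => D0v s 0) U := by
    rw [hg0]; exact LameHelper.smooth_shape SA_0_0 SA_0_0 SB_0_1 SA_0_0 SA_0_0 SA_2_0 SA_0_2 _ _ _ _ _ _ _
  have hsg1 : ContDiffOn ℝ ((⊤:ℕ∞) : WithTop ℕ∞) (fun s => D0v s 1) U := by
    rw [hg1]; exact LameHelper.smooth_shape SB_0_0 SB_0_0 SA_0_1 SB_0_0 SB_0_0 SB_2_0 SB_0_2 _ _ _ _ _ _ _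
  have H_g0_0 : ∀ z ∈ U, pd 0 (fun s => D0v s 0) z = ((-1 : ℝ)) * pd 0 ((fun t => v t 0)) z + ((-2 : ℝ) * c) * pd 1 ((fun t => v t 1)) z + z 0 * (((-2 : ℝ) * c) * pd 0 (pd 1 ((fun t => v t 1))) z + ((-2 : ℝ) * c) * pd 0 (pd 0 ((fun t => v t 0))) z + ((-2 : ℝ) * c) * pd 1 (pd 1 ((fun t => v t 0))) z) + z 0 * (z 0 * (((-1 : ℝ) * c) * pd 0 (pd 0 (pd 0 ((fun t => v t 0)))) z + ((-1 : ℝ) * c) * pd 0 (pd 1 (pd 1 ((fun t => v t 0)))) z)) := by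
    intro z hz
    rw [hg0, LameHelper.pd_shape (dA_0_0 z hz) (dA_0_0 z hz) (dB_0_1 z hz) (dA_0_0 z hz) (dA_0_0 z hz) (dA_2_0 z hz) (dA_0_2 z hz) _ _ _ _ _ _ _ 0, LameHelper.pd_coord00]
    ring
  have H_g0_1 : ∀ z ∈ U, pd 1 (fun s => D0v s 0) z = ((-1 : ℝ)) * pd 1 ((fun t => v t 0)) z + (0 : ℝ) * v z 0 + z 0 * (((-2 : ℝ) * c) * pd 1 (pd 1 ((fun t => v t 1))) z + (0 : ℝ) * v z 0 + (0 : ℝ) * v z 0) + z 0 * (z 0 * (((-1 : ℝ) * c) * pd 0 (pd 0 (pd 1 ((fun t => v t 0)))) z + ((-1 : ℝ) * c) * pd 1 (pd 1 (pd 1 ((fun t => v t 0)))) z)) := by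
    intro z hz
    rw [hg0, LameHelper.pd_shape (dA_0_0 z hz) (dA_0_0 z hz) (dB_0_1 z hz) (dA_0_0 z hz) (dA_0_0 z hz) (dA_2_0 z hz) (dA_0_2 z hz) _ _ _ _ _ _ _ 1, LameHelper.pd_coord10, LameHelper.pdsw2 hU SA_0_0 z hz]
    ring
  have H_g1_0 : ∀ z ∈ U, pd 0 (fun s => D0v s 1) z = ((-1 : ℝ)) * pd 0 ((fun t => v t 1)) z + ((-2 : ℝ) * c) * pd 1 ((fun t => v t 0)) z + z 0 * (((-2 : ℝ) * c) * pd 0 (pd 1 ((fun t => v t 0))) z + ((2 : ℝ) * c) * pd 0 (pd 0 ((fun t => v t 1))) z + ((2 : ℝ) * c) * pd 1 (pd 1 ((fun t => v t 1))) z) + z 0 * (z 0 * (((1 : ℝ) * c) * pd 0 (pd 0 (pd 0 ((fun t => v t 1)))) z + ((1 : ℝ) * c) * pd 0 (pd 1 (pd 1 ((fun t => v t 1)))) z)) := by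
    intro z hz
    rw [hg1, LameHelper.pd_shape (dB_0_0 z hz) (dB_0_0 z hz) (dA_0_1 z hz) (dB_0_0 z hz) (dB_0_0 z hz) (dB_2_0 z hz) (dB_0_2 z hz) _ _ _ _ _ _ _ 0, LameHelper.pd_coord00]
    ring
  have H_g1_1 : ∀ z ∈ U, pd 1 (fun s => D0v s 1) z = ((-1 : ℝ)) * pd 1 ((fun t => v t 1)) z + (0 : ℝ) * v z 0 + z 0 * (((-2 : ℝ) * c) * pd 1 (pd 1 ((fun t => v t 0))) z + (0 : ℝ) * v z 0 + (0 : ℝ) * v z 0) + z 0 * (z 0 * (((1 : ℝ) * c) * pd 0 (pd 0 (pd 1 ((fun t => v t 1)))) z + ((1 : ℝ) * c) * pd 1 (pd 1 (pd 1 ((fun t => v t 1)))) z)) := by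
    intro z hz
    rw [hg1, LameHelper.pd_shape (dB_0_0 z hz) (dB_0_0 z hz) (dA_0_1 z hz) (dB_0_0 z hz) (dB_0_0 z hz) (dB_2_0 z hz) (dB_0_2 z hz) _ _ _ _ _ _ _ 1, LameHelper.pd_coord10, LameHelper.pdsw2 hU SB_0_0 z hz]
    ring
  have H2_g0_00 : pd 0 (pd 0 (fun s => D0v s 0)) y = (((-2 : ℝ) * c) * pd 1 (pd 1 ((fun t => v t 0))) y + ((-4 : ℝ) * c * y 0) * pd 0 (pd 1 (pd 1 ((fun t => v t 0)))) y + ((-1 : ℝ) + (-2 : ℝ) * c) * pd 0 (pd 0 ((fun t => v t 0))) y + ((-1 : ℝ) * c * (y 0) ^ 2) * pd 0 (pd 0 (pd 1 (pd 1 ((fun t => v t 0))))) y + ((-4 : ℝ) * c * y 0) * pd 0 (pd 0 (pd 0 ((fun t => v t 0)))) y + ((-1 : ℝ) * c * (y 0) ^ 2) * pd 0 (pd 0 (pd 0 (pd 0 ((fun t => v t 0))))) y + ((-4 : ℝ) * c) * pd 0 (pd 1 ((fun t => v t 1))) y + ((-2 : ℝ) * c * y 0) * pd 0 (pd 0 (pd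 1 ((fun t => v t 1)))) y) := by
    rw [LameHelper.pd_congr_on hU H_g0_0 hyU 0, LameHelper.pd_shape (dA_1_0 y hyU) (dB_0_1 y hyU) (dB_1_1 y hyU) (dA_2_0 y hyU) (dA_0_2 y hyU) (dA_3_0 y hyU) (dA_1_2 y hyU) _ _ _ _ _ _ _ 0, LameHelper.pd_coord00]
    ring
  have H2_g0_11 : pd 1 (pd 1 (fun s => D0v s 0)) y = (((-1 : ℝ)) * pd 1 (pd 1 ((fun t => v t 0))) y + ((-1 : ℝ) * c * (y 0) ^ 2) * pd 1 (pd 1 (pd 1 (pd 1 ((fun t => v t 0))))) y + ((-1 : ℝ) * c * (y 0) ^ 2) * pd 0 (pd 0 (pd 1 (pd 1 ((fun t => v t 0))))) y + ((-2 : ℝ) * c * y 0) * pd 1 (pd 1 (pd 1 ((fun t => v t 1)))) y) := by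
    rw [LameHelper.pd_congr_on hU H_g0_1 hyU 1, LameHelper.pd_shape (dA_0_1 y hyU) (dA_0_0 y hyU) (dB_0_2 y hyU) (dA_0_0 y hyU) (dA_0_0 y hyU) (dA_2_1 y hyU) (dA_0_3 y hyU) _ _ _ _ _ _ _ 1, LameHelper.pd_coord10, LameHelper.pdsw2 hU SA_0_1 y hyU]
    ring
  have H2_g0_01 : pd 1 (pd 0 (fun s => D0v s 0)) y = (((-2 : ℝ) * c * y 0) * pd 1 (pd 1 (pd 1 ((fun t => v t 0)))) y + ((-1 : ℝ)) * pd 0 (pd 1 ((fun t => v t 0))) y + ((-1 : ℝ) * c * (y 0) ^ 2) * pd 0 (pd 1 (pd 1 (pd 1 ((fun t => v t 0))))) y + ((-2 : ℝ) * c * y 0) * pd 0 (pd 0 (pd 1 ((fun t => v t 0)))) y + ((-1 : ℝ) * c * (y 0) ^ 2) * pd 0 (pd 0 (pd 0 (pd 1 ((fun t => v t 0))))) y + ((-2 : ℝ) * c) * pd 1 (pd 1 ((fun t => v t 1))) y + ((-2 : ℝ) * c * y 0) * pd 0 (pd 1 (pd 1 ((fun t => v t 1)))) y) := by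
    rw [LameHelper.pd_congr_on hU H_g0_0 hyU 1, LameHelper.pd_shape (dA_1_0 y hyU) (dB_0_1 y hyU) (dB_1_1 y hyU) (dA_2_0 y hyU) (dA_0_2 y hyU) (dA_3_0 y hyU) (dA_1_2 y hyU) _ _ _ _ _ _ _ 1, LameHelper.pd_coord10, LameHelper.pdsw1 hU SA_0_0 y hyU, LameHelper.pdsw1 hU SA_0_2 y hyU, LameHelper.pdsw1 hU SB_0_1 y hyU, LameHelper.pdsw2 hU SA_0_0 y hyU, LameHelper.pdsw3 hU SA_0_0 y hyU]
    ring
  have H2_g1_00 : pd 0 (pd 0 (fun s => D0v s 1)) y = (((-4 : ℝ) * c) * pd 0 (pd 1 ((fun t => v t 0))) y + ((-2 : ℝ) * c * y 0) * pd 0 (pd 0 (pd 1 ((fun t => v t 0)))) y + ((2 : ℝ) * c) * pd 1 (pd 1 ((fun t => v t 1))) y + ((4 : ℝ) * c * y 0) * pd 0 (pd 1 (pd 1 ((fun t => v t 1)))) y + ((-1 : ℝ) + (2 : ℝ) * c) * pd 0 (pd 0 ((fun t => v t 1))) y + ((1 : ℝ) * c * (y 0) ^ 2) * pd 0 (pd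 0 (pd 1 (pd 1 ((fun t => v t 1))))) y + ((4 : ℝ) * c * y 0) * pd 0 (pd 0 (pd 0 ((fun t => v t 1)))) y + ((1 : ℝ) * c * (y 0) ^ 2) * pd 0 (pd 0 (pd 0 (pd 0 ((fun t => v t 1))))) y) := by
    rw [LameHelper.pd_congr_on hU H_g1_0 hyU 0, LameHelper.pd_shape (dB_1_0 y hyU) (dA_0_1 y hyU) (dA_1_1 y hyU) (dB_2_0 y hyU) (dB_0_2 y hyU) (dB_3_0 y hyU) (dB_1_2 y hyU) _ _ _ _ _ _ _ 0, LameHelper.pd_coord00]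
    ring
  have H2_g1_11 : pd 1 (pd 1 (fun s => D0v s 1)) y = (((-2 : ℝ) * c * y 0) * pd 1 (pd 1 (pd 1 ((fun t => v t 0)))) y + ((-1 : ℝ)) * pd 1 (pd 1 ((fun t => v t 1))) y + ((1 : ℝ) * c * (y 0) ^ 2) * pd 1 (pd 1 (pd 1 (pd 1 ((fun t => v t 1))))) y + ((1 : ℝ) * c * (y 0) ^ 2) * pd 0 (pd 0 (pd 1 (pd 1 ((fun t => v t 1))))) y) := by
    rw [LameHelper.pd_congr_on hU H_g1_1 hyU 1, LameHelper.pd_shape (dB_0_1 y hyU) (dA_0_0 y hyU) (dA_0_2 y hyU) (dA_0_0 y hyU) (dA_0_0 y hyU) (dB_2_1 y hyU) (dB_0_3 y hyU) _ _ _ _ _ _ _ 1, LameHelper.pd_coord10, LameHelper.pdsw2 hU SB_0_1 y hyU]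
    ring
  have H2_g1_10 : pd 0 (pd 1 (fun s => D0v s 1)) y = (((-2 : ℝ) * c) * pd 1 (pd 1 ((fun t => v t 0))) y + ((-2 : ℝ) * c * y 0) * pd 0 (pd 1 (pd 1 ((fun t => v t 0)))) y + ((2 : ℝ) * c * y 0) * pd 1 (pd 1 (pd 1 ((fun t => v t 1)))) y + ((-1 : ℝ)) * pd 0 (pd 1 ((fun t => v t 1))) y + ((1 : ℝ) * c * (y 0) ^ 2) * pd 0 (pd 1 (pd 1 (pd 1 ((fun t => v t 1))))) y + ((2 : ℝ) * c * y 0) * pd 0 (pd 0 (pd 1 ((fun t => v t 1)))) y + ((1 : ℝ) * c * (y 0) ^ 2) * pd 0 (pd 0 (pd 0 (pd 1 ((fun t => v t 1))))) y) := by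
    rw [LameHelper.pd_congr_on hU H_g1_1 hyU 0, LameHelper.pd_shape (dB_0_1 y hyU) (dA_0_0 y hyU) (dA_0_2 y hyU) (dA_0_0 y hyU) (dA_0_0 y hyU) (dB_2_1 y hyU) (dB_0_3 y hyU) _ _ _ _ _ _ _ 0, LameHelper.pd_coord00]
    ring
  have hdiv : divg v = fun z => pd 0 (fun t => v t 0) z + pd 1 (fun t => v t 1) z := rfl
  have hE1_00 : ∀ z ∈ U, μ * (pd 0 (pd 0 ((fun t => v t 0))) z + pd 1 (pd 1 ((fun t => v t 0))) z) + (lam + μ) * (pd 0 (pd 0 ((fun t => v t 0))) z + pd 0 (pd 1 ((fun t => v t 1))) z) = 0 := by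
    intro z hz
    have h := hlame z hz 0
    simp only [lame, lap] at h
    rw [hdiv, LameHelper.pd_add (dA_1_0 z hz) (dB_0_1 z hz)] at h
    linear_combination h
  have hE2_00 : ∀ z ∈ U, μ * (pd 0 (pd 0 ((fun t => v t 1))) z + pd 1 (pd 1 ((fun t => v t 1))) z) + (lam + μ) * (pd 0 (pd 1 ((fun t => v t 0))) z + pd 1 (pd 1 ((fun t => v t 1))) z) = 0 := by
    intro z hz
    have h := hlame z hz 1
    simp only [lame, lap] at h
    rw [hdiv, LameHelper.pd_add (dA_1_0 z hz) (dB_0_1 z hz)] at h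
    rw [LameHelper.pdsw1 hU SA_0_0 z hz] at h
    linear_combination h
  have hE1_10 : ∀ z ∈ U, μ * (pd 0 (pd 0 (pd 0 ((fun t => v t 0)))) z + pd 0 (pd 1 (pd 1 ((fun t => v t 0)))) z) + (lam + μ) * (pd 0 (pd 0 (pd 0 ((fun t => v t 0)))) z + pd 0 (pd 0 (pd 1 ((fun t => v t 1)))) z) = 0 := by
    intro z hz
    have e := LameHelper.pd_congr_on hU hE1_00 hz 0
    rw [LameHelper.pd_zero, LameHelper.pd_lin4 (dA_2_0 z hz) (dA_0_2 z hz) (dA_2_0 z hz) (dB_1_1 z hz) μ (lam + μ) 0] at e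
    linear_combination e
  have hE1_01 : ∀ z ∈ U, μ * (pd 0 (pd 0 (pd 1 ((fun t => v t 0)))) z + pd 1 (pd 1 (pd 1 ((fun t => v t 0)))) z) + (lam + μ) * (pd 0 (pd 0 (pd 1 ((fun t => v t 0)))) z + pd 0 (pd 1 (pd 1 ((fun t => v t 1)))) z) = 0 := by
    intro z hz
    have e := LameHelper.pd_congr_on hU hE1_00 hz 1
    rw [LameHelper.pd_zero, LameHelper.pd_lin4 (dA_2_0 z hz) (dA_0_2 z hz) (dA_2_0 z hz) (dB_1_1 z hz) μ (lam + μ) 1, LameHelper.pdsw1 hU SB_0_1 z hz, LameHelper.pdsw2 hU SA_0_0 z hz] at e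
    linear_combination e
  have hE1_20 : ∀ z ∈ U, μ * (pd 0 (pd 0 (pd 0 (pd 0 ((fun t => v t 0))))) z + pd 0 (pd 0 (pd 1 (pd 1 ((fun t => v t 0))))) z) + (lam + μ) * (pd 0 (pd 0 (pd 0 (pd 0 ((fun t => v t 0))))) z + pd 0 (pd 0 (pd 0 (pd 1 ((fun t => v t 1))))) z) = 0 := by
    intro z hz
    have e := LameHelper.pd_congr_on hU hE1_10 hz 0
    rw [LameHelper.pd_zero, LameHelper.pd_lin4 (dA_3_0 z hz) (dA_1_2 z hz) (dA_3_0 z hz) (dB_2_1 z hz) μ (lam + μ) 0] at e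
    linear_combination e
  have hE1_11 : ∀ z ∈ U, μ * (pd 0 (pd 0 (pd 0 (pd 1 ((fun t => v t 0))))) z + pd 0 (pd 1 (pd 1 (pd 1 ((fun t => v t 0))))) z) + (lam + μ) * (pd 0 (pd 0 (pd 0 (pd 1 ((fun t => v t 0))))) z + pd 0 (pd 0 (pd 1 (pd 1 ((fun t => v t 1))))) z) = 0 := by
    intro z hz
    have e := LameHelper.pd_congr_on hU hE1_01 hz 0
    rw [LameHelper.pd_zero, LameHelper.pd_lin4 (dA_2_1 z hz) (dA_0_3 z hz) (dA_2_1 z hz) (dB_1_2 z hz) μ (lam + μ) 0] at e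
    linear_combination e
  have hE1_02 : ∀ z ∈ U, μ * (pd 0 (pd 0 (pd 1 (pd 1 ((fun t => v t 0))))) z + pd 1 (pd 1 (pd 1 (pd 1 ((fun t => v t 0))))) z) + (lam + μ) * (pd 0 (pd 0 (pd 1 (pd 1 ((fun t => v t 0))))) z + pd 0 (pd 1 (pd 1 (pd 1 ((fun t => v t 1))))) z) = 0 := by
    intro z hz
    have e := LameHelper.pd_congr_on hU hE1_01 hz 1
    rw [LameHelper.pd_zero, LameHelper.pd_lin4 (dA_2_1 z hz) (dA_0_3 z hz) (dA_2_1 z hz) (dB_1_2 z hz) μ (lam + μ) 1, LameHelper.pdsw1 hU SB_0_2 z hz, LameHelper.pdsw2 hU SA_0_1 z hz] at e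
    linear_combination e
  have hE2_10 : ∀ z ∈ U, μ * (pd 0 (pd 0 (pd 0 ((fun t => v t 1)))) z + pd 0 (pd 1 (pd 1 ((fun t => v t 1)))) z) + (lam + μ) * (pd 0 (pd 0 (pd 1 ((fun t => v t 0)))) z + pd 0 (pd 1 (pd 1 ((fun t => v t 1)))) z) = 0 := by
    intro z hz
    have e := LameHelper.pd_congr_on hU hE2_00 hz 0
    rw [LameHelper.pd_zero, LameHelper.pd_lin4 (dB_2_0 z hz) (dB_0_2 z hz) (dA_1_1 z hz) (dB_0_2 z hz) μ (lam + μ) 0] at e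
    linear_combination e
  have hE2_01 : ∀ z ∈ U, μ * (pd 0 (pd 0 (pd 1 ((fun t => v t 1)))) z + pd 1 (pd 1 (pd 1 ((fun t => v t 1)))) z) + (lam + μ) * (pd 0 (pd 1 (pd 1 ((fun t => v t 0)))) z + pd 1 (pd 1 (pd 1 ((fun t => v t 1)))) z) = 0 := by
    intro z hz
    have e := LameHelper.pd_congr_on hU hE2_00 hz 1
    rw [LameHelper.pd_zero, LameHelper.pd_lin4 (dB_2_0 z hz) (dB_0_2 z hz) (dA_1_1 z hz) (dB_0_2 z hz) μ (lam + μ) 1, LameHelper.pdsw1 hU SA_0_1 z hz, LameHelper.pdsw2 hU SB_0_0 z hz] at e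
    linear_combination e
  have hE2_20 : ∀ z ∈ U, μ * (pd 0 (pd 0 (pd 0 (pd 0 ((fun t => v t 1))))) z + pd 0 (pd 0 (pd 1 (pd 1 ((fun t => v t 1))))) z) + (lam + μ) * (pd 0 (pd 0 (pd 0 (pd 1 ((fun t => v t 0))))) z + pd 0 (pd 0 (pd 1 (pd 1 ((fun t => v t 1))))) z) = 0 := by
    intro z hz
    have e := LameHelper.pd_congr_on hU hE2_10 hz 0
    rw [LameHelper.pd_zero, LameHelper.pd_lin4 (dB_3_0 z hz) (dB_1_2 z hz) (dA_2_1 z hz) (dB_1_2 z hz) μ (lam + μ) 0] at e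
    linear_combination e
  have hE2_11 : ∀ z ∈ U, μ * (pd 0 (pd 0 (pd 0 (pd 1 ((fun t => v t 1))))) z + pd 0 (pd 1 (pd 1 (pd 1 ((fun t => v t 1))))) z) + (lam + μ) * (pd 0 (pd 0 (pd 1 (pd 1 ((fun t => v t 0))))) z + pd 0 (pd 1 (pd 1 (pd 1 ((fun t => v t 1))))) z) = 0 := by
    intro z hz
    have e := LameHelper.pd_congr_on hU hE2_01 hz 0
    rw [LameHelper.pd_zero, LameHelper.pd_lin4 (dB_2_1 z hz) (dB_0_3 z hz) (dA_1_2 z hz) (dB_0_3 z hz) μ (lam + μ) 0] at e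
    linear_combination e
  have hE2_02 : ∀ z ∈ U, μ * (pd 0 (pd 0 (pd 1 (pd 1 ((fun t => v t 1))))) z + pd 1 (pd 1 (pd 1 (pd 1 ((fun t => v t 1))))) z) + (lam + μ) * (pd 0 (pd 1 (pd 1 (pd 1 ((fun t => v t 0))))) z + pd 1 (pd 1 (pd 1 (pd 1 ((fun t => v t 1))))) z) = 0 := by
    intro z hz
    have e := LameHelper.pd_congr_on hU hE2_01 hz 1
    rw [LameHelper.pd_zero, LameHelper.pd_lin4 (dB_2_1 z hz) (dB_0_3 z hz) (dA_1_2 z hz) (dB_0_3 z hz) μ (lam + μ) 1, LameHelper.pdsw1 hU SA_0_2 z hz, LameHelper.pdsw2 hU SB_0_1 z hz] at e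
    linear_combination e
  have hw0c : ∀ z : E2, w z 0 = D0v (LameHelper.RL z) 0 := fun z => by rw [hw z, hRfun]
  have hw1c : ∀ z : E2, w z 1 = D0v (LameHelper.RL z) 1 := fun z => by rw [hw z, hRfun]
  have k00 : ∀ z : E2, LameHelper.RL z ∈ U → pd 0 (fun t => w t 0) z = -(pd 0 (fun s => D0v s 0) (LameHelper.RL z)) :=
    fun z hz => LameHelper.pd_comp0 (f := fun s => D0v s 0) hw0c (LameHelper.diff_of_smooth hU hsg0 hz)
  have k10 : ∀ z : E2, LameHelper.RL z ∈ U → pd 1 (fun t => w t 0) z = pd 1 (fun s => D0v s 0) (LameHelper.RL z) :=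
    fun z hz => LameHelper.pd_comp1 (f := fun s => D0v s 0) hw0c (LameHelper.diff_of_smooth hU hsg0 hz)
  have k01 : ∀ z : E2, LameHelper.RL z ∈ U → pd 0 (fun t => w t 1) z = -(pd 0 (fun s => D0v s 1) (LameHelper.RL z)) :=
    fun z hz => LameHelper.pd_comp0 (f := fun s => D0v s 1) hw1c (LameHelper.diff_of_smooth hU hsg1 hz)
  have k11 : ∀ z : E2, LameHelper.RL z ∈ U → pd 1 (fun t => w t 1) z = pd 1 (fun s => D0v s 1) (LameHelper.RL z) :=
    fun z hz => LameHelper.pd_comp1 (f := fun s => D0v s 1) hw1c (LameHelper.diff_of_smooth hU hsg1 hz)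
  have hdw : ∀ z : E2, LameHelper.RL z ∈ U → divg w z = -(pd 0 (fun s => D0v s 0) (LameHelper.RL z)) + pd 1 (fun s => D0v s 1) (LameHelper.RL z) := by
    intro z hz
    simp only [divg]
    rw [k00 z hz, k11 z hz]
  have hVopen : IsOpen ((⇑LameHelper.RL) ⁻¹' U) := hU.preimage LameHelper.RL.continuous
  have hxV : x ∈ (⇑LameHelper.RL) ⁻¹' U := hyU'
  have q1 : pd 0 (pd 0 (fun t => w t 0)) x = pd 0 (pd 0 (fun s => D0v s 0)) y := by
    have e1 := LameHelper.pd_congr_on hVopen (fun z hz => k00 z hz) hxV 0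
    rw [LameHelper.pd_neg, LameHelper.pd_comp0 (f := pd 0 (fun s => D0v s 0)) (fun _ => rfl)
      (LameHelper.diff_of_smooth hU (LameHelper.smooth_pd hU hsg0 0) hyU'), hyx, neg_neg] at e1
    exact e1
  have q2 : pd 1 (pd 1 (fun t => w t 0)) x = pd 1 (pd 1 (fun s => D0v s 0)) y := by
    have e1 := LameHelper.pd_congr_on hVopen (fun z hz => k10 z hz) hxV 1
    rw [LameHelper.pd_comp1 (f := pd 1 (fun s => D0v s 0)) (fun _ => rfl)
      (LameHelper.diff_of_smooth hU (LameHelper.smooth_pd hU hsg0 1) hyU'), hyx] at e1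
    exact e1
  have q1' : pd 0 (pd 0 (fun t => w t 1)) x = pd 0 (pd 0 (fun s => D0v s 1)) y := by
    have e1 := LameHelper.pd_congr_on hVopen (fun z hz => k01 z hz) hxV 0
    rw [LameHelper.pd_neg, LameHelper.pd_comp0 (f := pd 0 (fun s => D0v s 1)) (fun _ => rfl)
      (LameHelper.diff_of_smooth hU (LameHelper.smooth_pd hU hsg1 0) hyU'), hyx, neg_neg] at e1
    exact e1
  have q2' : pd 1 (pd 1 (fun t => w t 1)) x = pd 1 (pd 1 (fun s => D0v s 1)) y := by
    have e1 := LameHelper.pd_congr_on hVopen (fun z hz => k11 z hz) hxV 1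
    rw [LameHelper.pd_comp1 (f := pd 1 (fun s => D0v s 1)) (fun _ => rfl)
      (LameHelper.diff_of_smooth hU (LameHelper.smooth_pd hU hsg1 1) hyU'), hyx] at e1
    exact e1
  have q3 : pd 0 (divg w) x = pd 0 (pd 0 (fun s => D0v s 0)) y - pd 0 (pd 1 (fun s => D0v s 1)) y := by
    have e1 := LameHelper.pd_congr_on hVopen (fun z hz => hdw z hz) hxV 0
    rw [LameHelper.pd_comp0 (f := fun u => -(pd 0 (fun s => D0v s 0) u) + pd 1 (fun s => D0v s 1) u) (fun _ => rfl)
      (DifferentiableAt.add (DifferentiableAt.neg (LameHelper.diff_of_smooth hU (LameHelper.smooth_pd hU hsg0 0) hyU'))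
        (LameHelper.diff_of_smooth hU (LameHelper.smooth_pd hU hsg1 1) hyU')), hyx] at e1
    rw [e1, LameHelper.pd_add (DifferentiableAt.fun_neg (LameHelper.diff_of_smooth hU (LameHelper.smooth_pd hU hsg0 0) hyU))
      (LameHelper.diff_of_smooth hU (LameHelper.smooth_pd hU hsg1 1) hyU), LameHelper.pd_neg]
    try ring
  have q4 : pd 1 (divg w) x = -(pd 1 (pd 0 (fun s => D0v s 0)) y) + pd 1 (pd 1 (fun s => D0v s 1)) y := by
    have e1 := LameHelper.pd_congr_on hVopen (fun z hz => hdw z hz) hxV 1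
    rw [LameHelper.pd_comp1 (f := fun u => -(pd 0 (fun s => D0v s 0) u) + pd 1 (fun s => D0v s 1) u) (fun _ => rfl)
      (DifferentiableAt.add (DifferentiableAt.neg (LameHelper.diff_of_smooth hU (LameHelper.smooth_pd hU hsg0 0) hyU'))
        (LameHelper.diff_of_smooth hU (LameHelper.smooth_pd hU hsg1 1) hyU')), hyx] at e1
    rw [e1, LameHelper.pd_add (DifferentiableAt.fun_neg (LameHelper.diff_of_smooth hU (LameHelper.smooth_pd hU hsg0 0) hyU))
      (LameHelper.diff_of_smooth hU (LameHelper.smooth_pd hU hsg1 1) hyU), LameHelper.pd_neg]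
    try ring
  fin_cases i
  · show lame μ lam w x 0 = 0
    simp only [lame, lap]
    rw [q1, q2, q3, H2_g0_00, H2_g0_11, H2_g1_10]
    have key : (lam + 3 * μ) ^ 2 * (μ * ((((-2 : ℝ) * c) * pd 1 (pd 1 ((fun t => v t 0))) y + ((-4 : ℝ) * c * y 0) * pd 0 (pd 1 (pd 1 ((fun t => v t 0)))) y + ((-1 : ℝ) + (-2 : ℝ) * c) * pd 0 (pd 0 ((fun t => v t 0))) y + ((-1 : ℝ) * c * (y 0) ^ 2) * pd 0 (pd 0 (pd 1 (pd 1 ((fun t => v t 0))))) y + ((-4 : ℝ) * c * y 0) * pd 0 (pd 0 (pd 0 ((fun t => v t 0)))) y + ((-1 : ℝ) * c * (y 0) ^ 2) * pd 0 (pd 0 (pd 0 (pd 0 ((fun t => v t 0))))) y + ((-4 : ℝ) * c) * pd 0 (pd 1 ((fun t => v t 1))) y + ((-2 : ℝ) * c * y 0) * pd 0 (pd 0 (pd 1 ((fun t => v t 1)))) y) + (((-1 : ℝ)) * pd 1 (pd 1 ((fun t => v t 0))) y + ((-1 : ℝ) * c * (y 0) ^ 2) * pd 1 (pd 1 (pd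 1 (pd 1 ((fun t => v t 0))))) y + ((-1 : ℝ) * c * (y 0) ^ 2) * pd 0 (pd 0 (pd 1 (pd 1 ((fun t => v t 0))))) y + ((-2 : ℝ) * c * y 0) * pd 1 (pd 1 (pd 1 ((fun t => v t 1)))) y)) + (lam + μ) * ((((-2 : ℝ) * c) * pd 1 (pd 1 ((fun t => v t 0))) y + ((-4 : ℝ) * c * y 0) * pd 0 (pd 1 (pd 1 ((fun t => v t 0)))) y + ((-1 : ℝ) + (-2 : ℝ) * c) * pd 0 (pd 0 ((fun t => v t 0))) y + ((-1 : ℝ) * c * (y 0) ^ 2) * pd 0 (pd 0 (pd 1 (pd 1 ((fun t => v t 0))))) y + ((-4 : ℝ) * c * y 0) * pd 0 (pd 0 (pd 0 ((fun t => v t 0)))) y + ((-1 : ℝ) * c * (y 0) ^ 2) * pd 0 (pd 0 (pd 0 (pd 0 ((fun t => v t 0))))) y + ((-4 : ℝ) * c) * pd 0 (pd 1 ((fun t => v t 1))) y + ((-2 : ℝ) * c * y 0) * pd 0 (pd 0 (pd 1 ((fun t => v t 1)))) y) - (((-2 : ℝ) * c) * pd 1 (pd 1 ((fun t => v t 0)))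 y + ((-2 : ℝ) * c * y 0) * pd 0 (pd 1 (pd 1 ((fun t => v t 0)))) y + ((2 : ℝ) * c * y 0) * pd 1 (pd 1 (pd 1 ((fun t => v t 1)))) y + ((-1 : ℝ)) * pd 0 (pd 1 ((fun t => v t 1))) y + ((1 : ℝ) * c * (y 0) ^ 2) * pd 0 (pd 1 (pd 1 (pd 1 ((fun t => v t 1))))) y + ((2 : ℝ) * c * y 0) * pd 0 (pd 0 (pd 1 ((fun t => v t 1)))) y + ((1 : ℝ) * c * (y 0) ^ 2) * pd 0 (pd 0 (pd 0 (pd 1 ((fun t => v t 1))))) y))) = 0 := by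
      linear_combination ((-3 : ℝ) * lam ^ 2 + (-14 : ℝ) * μ * lam + (-15 : ℝ) * μ ^ 2) * (hE1_00 y hyU) + ((-1 : ℝ) * lam ^ 2 * (y 0) ^ 2 + (-4 : ℝ) * μ * lam * (y 0) ^ 2 + (-3 : ℝ) * μ ^ 2 * (y 0) ^ 2) * (hE1_02 y hyU) + ((-4 : ℝ) * lam ^ 2 * y 0 + (-16 : ℝ) * μ * lam * y 0 + (-12 : ℝ) * μ ^ 2 * y 0) * (hE1_10 y hyU) + ((-1 : ℝ) * lam ^ 2 * (y 0) ^ 2 + (-4 : ℝ) * μ * lam * (y 0) ^ 2 + (-3 : ℝ) * μ ^ 2 * (y 0) ^ 2) * (hE1_20 y hyU) + ((-2 : ℝ) * lam ^ 2 * y 0 + (-8 : ℝ) * μ * lam * y 0 + (-6 : ℝ) * μ ^ 2 * y 0) * (hE2_01 y hyU) + (((-2 : ℝ) * μ * lam + (-6 : ℝ) * μ ^ 2) * pd 1 (pd 1 ((fun t => v t 0))) y + ((-1 : ℝ) * μ * lam * (y 0) ^ 2 + (-3 : ℝ) * μ ^ 2 * (y 0) ^ 2) * pd 1 (pd 1 (pd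 1 (pd 1 ((fun t => v t 0))))) y + ((-2 : ℝ) * lam ^ 2 * y 0 + (-12 : ℝ) * μ * lam * y 0 + (-18 : ℝ) * μ ^ 2 * y 0) * pd 0 (pd 1 (pd 1 ((fun t => v t 0)))) y + ((-2 : ℝ) * lam ^ 2 + (-10 : ℝ) * μ * lam + (-12 : ℝ) * μ ^ 2) * pd 0 (pd 0 ((fun t => v t 0))) y + ((-1 : ℝ) * lam ^ 2 * (y 0) ^ 2 + (-6 : ℝ) * μ * lam * (y 0) ^ 2 + (-9 : ℝ) * μ ^ 2 * (y 0) ^ 2) * pd 0 (pd 0 (pd 1 (pd 1 ((fun t => v t 0))))) y + ((-4 : ℝ) * lam ^ 2 * y 0 + (-20 : ℝ) * μ * lam * y 0 + (-24 : ℝ) * μ ^ 2 * y 0) * pd 0 (pd 0 (pd 0 ((fun t => v t 0)))) y + ((-1 : ℝ) * lam ^ 2 * (y 0) ^ 2 + (-5 : ℝ) * μ * lam * (y 0) ^ 2 + (-6 : ℝ) * μ ^ 2 * (y 0) ^ 2) * pd 0 (pd 0 (pd 0 (pd 0 ((fun t => v t 0))))) y + ((-2 : ℝ) * lam ^ 2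 * y 0 + (-10 : ℝ) * μ * lam * y 0 + (-12 : ℝ) * μ ^ 2 * y 0) * pd 1 (pd 1 (pd 1 ((fun t => v t 1)))) y + ((-4 : ℝ) * lam ^ 2 + (-20 : ℝ) * μ * lam + (-24 : ℝ) * μ ^ 2) * pd 0 (pd 1 ((fun t => v t 1))) y + ((-1 : ℝ) * lam ^ 2 * (y 0) ^ 2 + (-4 : ℝ) * μ * lam * (y 0) ^ 2 + (-3 : ℝ) * μ ^ 2 * (y 0) ^ 2) * pd 0 (pd 1 (pd 1 (pd 1 ((fun t => v t 1))))) y + ((-4 : ℝ) * lam ^ 2 * y 0 + (-18 : ℝ) * μ * lam * y 0 + (-18 : ℝ) * μ ^ 2 * y 0) * pd 0 (pd 0 (pd 1 ((fun t => v t 1)))) y + ((-1 : ℝ) * lam ^ 2 * (y 0) ^ 2 + (-4 : ℝ) * μ * lam * (y 0) ^ 2 + (-3 : ℝ) * μ ^ 2 * (y 0) ^ 2) * pd 0 (pd 0 (pd 0 (pd 1 ((fun t => v t 1))))) y) * hcc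
    exact (mul_eq_zero.mp key).resolve_left (pow_ne_zero 2 h3)
  · show lame μ lam w x 1 = 0
    simp only [lame, lap]
    rw [q1', q2', q4, H2_g1_00, H2_g1_11, H2_g0_01]
    have key : (lam + 3 * μ) ^ 2 * (μ * ((((-4 : ℝ) * c) * pd 0 (pd 1 ((fun t => v t 0))) y + ((-2 : ℝ) * c * y 0) * pd 0 (pd 0 (pd 1 ((fun t => v t 0)))) y + ((2 : ℝ) * c) * pd 1 (pd 1 ((fun t => v t 1))) y + ((4 : ℝ) * c * y 0) * pd 0 (pd 1 (pd 1 ((fun t => v t 1)))) y + ((-1 : ℝ) + (2 : ℝ) * c) * pd 0 (pd 0 ((fun t => v t 1))) y + ((1 : ℝ) * c * (y 0) ^ 2) * pd 0 (pd 0 (pd 1 (pd 1 ((fun t => v t 1))))) y + ((4 : ℝ) * c * y 0) * pd 0 (pd 0 (pd 0 ((fun t => v t 1)))) y + ((1 : ℝ) * c * (y 0) ^ 2) * pd 0 (pd 0 (pd 0 (pd 0 ((fun t => v t 1))))) y) + (((-2 : ℝ) * c * y 0) * pd 1 (pd 1 (pd 1 ((fun t => v t 0)))) y + ((-1 : ℝ))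 * pd 1 (pd 1 ((fun t => v t 1))) y + ((1 : ℝ) * c * (y 0) ^ 2) * pd 1 (pd 1 (pd 1 (pd 1 ((fun t => v t 1))))) y + ((1 : ℝ) * c * (y 0) ^ 2) * pd 0 (pd 0 (pd 1 (pd 1 ((fun t => v t 1))))) y)) + (lam + μ) * (-(((-2 : ℝ) * c * y 0) * pd 1 (pd 1 (pd 1 ((fun t => v t 0)))) y + ((-1 : ℝ)) * pd 0 (pd 1 ((fun t => v t 0))) y + ((-1 : ℝ) * c * (y 0) ^ 2) * pd 0 (pd 1 (pd 1 (pd 1 ((fun t => v t 0))))) y + ((-2 : ℝ) * c * y 0) * pd 0 (pd 0 (pd 1 ((fun t => v t 0)))) y + ((-1 : ℝ) * c * (y 0) ^ 2) * pd 0 (pd 0 (pd 0 (pd 1 ((fun t => v t 0))))) y + ((-2 : ℝ) * c) * pd 1 (pd 1 ((fun t => v t 1))) y + ((-2 : ℝ) * c * y 0) * pd 0 (pd 1 (pd 1 ((fun t => v t 1)))) y) + (((-2 : ℝ) * c * y 0) * pd 1 (pd 1 (pd 1 ((fun t => v t 0)))) y + ((-1 : ℝ)) * pd 1 (pd 1 ((fun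 t => v t 1))) y + ((1 : ℝ) * c * (y 0) ^ 2) * pd 1 (pd 1 (pd 1 (pd 1 ((fun t => v t 1))))) y + ((1 : ℝ) * c * (y 0) ^ 2) * pd 0 (pd 0 (pd 1 (pd 1 ((fun t => v t 1))))) y))) = 0 := by
      linear_combination ((-2 : ℝ) * lam ^ 2 * y 0 + (-8 : ℝ) * μ * lam * y 0 + (-6 : ℝ) * μ ^ 2 * y 0) * (hE1_01 y hyU) + ((1 : ℝ) * lam ^ 2 + (2 : ℝ) * μ * lam + (-3 : ℝ) * μ ^ 2) * (hE2_00 y hyU) + ((1 : ℝ) * lam ^ 2 * (y 0) ^ 2 + (4 : ℝ) * μ * lam * (y 0) ^ 2 + (3 : ℝ) * μ ^ 2 * (y 0) ^ 2) * (hE2_02 y hyU) + ((4 : ℝ) * lam ^ 2 * y 0 + (16 : ℝ) * μ * lam * y 0 + (12 : ℝ) * μ ^ 2 * y 0) * (hE2_10 y hyU) + ((1 : ℝ) * lam ^ 2 * (y 0) ^ 2 + (4 : ℝ) * μ * lam * (y 0) ^ 2 + (3 : ℝ) * μ ^ 2 * (y 0) ^ 2) * (hE2_20 y hyU) + (((-2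 : ℝ) * μ * lam * y 0 + (-6 : ℝ) * μ ^ 2 * y 0) * pd 1 (pd 1 (pd 1 ((fun t => v t 0)))) y + ((-4 : ℝ) * μ * lam + (-12 : ℝ) * μ ^ 2) * pd 0 (pd 1 ((fun t => v t 0))) y + ((1 : ℝ) * lam ^ 2 * (y 0) ^ 2 + (4 : ℝ) * μ * lam * (y 0) ^ 2 + (3 : ℝ) * μ ^ 2 * (y 0) ^ 2) * pd 0 (pd 1 (pd 1 (pd 1 ((fun t => v t 0))))) y + ((2 : ℝ) * lam ^ 2 * y 0 + (6 : ℝ) * μ * lam * y 0) * pd 0 (pd 0 (pd 1 ((fun t => v t 0)))) y + ((1 : ℝ) * lam ^ 2 * (y 0) ^ 2 + (4 : ℝ) * μ * lam * (y 0) ^ 2 + (3 : ℝ) * μ ^ 2 * (y 0) ^ 2) * pd 0 (pd 0 (pd 0 (pd 1 ((fun t => v t 0))))) y + ((2 : ℝ) * lam ^ 2 + (10 : ℝ) * μ * lam + (12 : ℝ) * μ ^ 2) * pd 1 (pd 1 ((fun t => v t 1))) y + ((1 : ℝ) * lam ^ 2 * (y 0) ^ 2 + (5 : ℝ) * μ *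 lam * (y 0) ^ 2 + (6 : ℝ) * μ ^ 2 * (y 0) ^ 2) * pd 1 (pd 1 (pd 1 (pd 1 ((fun t => v t 1))))) y + ((2 : ℝ) * lam ^ 2 * y 0 + (12 : ℝ) * μ * lam * y 0 + (18 : ℝ) * μ ^ 2 * y 0) * pd 0 (pd 1 (pd 1 ((fun t => v t 1)))) y + ((2 : ℝ) * μ * lam + (6 : ℝ) * μ ^ 2) * pd 0 (pd 0 ((fun t => v t 1))) y + ((1 : ℝ) * lam ^ 2 * (y 0) ^ 2 + (6 : ℝ) * μ * lam * (y 0) ^ 2 + (9 : ℝ) * μ ^ 2 * (y 0) ^ 2) * pd 0 (pd 0 (pd 1 (pd 1 ((fun t => v t 1))))) y + ((4 : ℝ) * μ * lam * y 0 + (12 : ℝ) * μ ^ 2 * y 0) * pd 0 (pd 0 (pd 0 ((fun t => v t 1)))) y + ((1 : ℝ) * μ * lam * (y 0) ^ 2 + (3 : ℝ) * μ ^ 2 * (y 0) ^ 2) * pd 0 (pd 0 (pd 0 (pd 0 ((fun t => v t 1))))) y) * hcc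
    exact (mul_eq_zero.mp key).resolve_left (pow_ne_zero 2 h3)
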